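/- Given constants D > 0 and κ_a > 0, define φ(τ) = κ_a/√(πDτ) − (κ_a²/D)·erfcx(κ_a·√(τ/D)) for τ > 0. Then for every s > 0, the Laplace transform of φ satisfies ∫_0^∞ e^{−sτ}·φ(τ) dτ = κ_a / (κ_a + √(Ds)). -/

import Mathlib

open Real MeasureTheory Set

/-- The complementary error function `erfc x = (2/√π) ∫_x^∞ e^{-t²} dt`. -/
noncomputable def erfc (x : ℝ) : ℝ := (2 / Real.sqrt π) * ∫ t in Set.Ioi x, Real.exp (-t ^ 2)

/-- The scaled complementary error function `erfcx x = e^{x²} erfc x`. -/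
noncomputable def erfcx (x : ℝ) : ℝ := Real.exp (x ^ 2) * erfc x

/-- The first-adsorption-time density
`φ(τ) = κ_a/√(πDτ) − (κ_a²/D) erfcx(κ_a √(τ/D))`. -/
noncomputable def phi (D κa τ : ℝ) : ℝ :=
  κa / Real.sqrt (π * D * τ) - (κa ^ 2 / D) * erfcx (κa * Real.sqrt (τ / D))

/-!
Replacing `κ_a` by `a = κ_a / √D` reduces the claim to `D = 1`. Since
`d/du erfcx (c √u) = c² erfcx (c √u) - c / √(πu)`, for `s ≠ a²` the function
`e^{-su} (a² erfcx (a √u) - a √s erfcx (√s √u)) / (s - a²)`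
is a primitive of `e^{-sτ} φ(τ)`. It tends to `0` at infinity (as `erfcx x ≤ 1 / (√π x)`) and
equals `-a / (a + √s)` at `0`; the integrand is nonnegative by the same bound on `erfcx`, so the
improper integral is `a / (a + √s)`. The exceptional value `s = a²` follows by continuity of the
Laplace transform in `s`.
-/

open Filter Topology

lemma integrable_exp_neg_sq : Integrable fun t : ℝ => exp (-t ^ 2) := by
  simpa using integrable_exp_neg_mul_sq one_pos

lemma erfc_eq_sub_intervalIntegral (x : ℝ) :
    erfc x =
      2 / √π * ((∫ t in Ioi 0, exp (-t ^ 2)) - ∫ t in (0 : ℝ)..x, exp (-t ^ 2)) := by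
  rw [← intervalIntegral.integral_Ioi_sub_Ioi' integrable_exp_neg_sq.integrableOn
    integrable_exp_neg_sq.integrableOn, sub_sub_cancel, erfc]

lemma hasDerivAt_erfc (x : ℝ) : HasDerivAt erfc (-(2 / √π) * exp (-x ^ 2)) x := by
  have hcont : Continuous fun t : ℝ => exp (-t ^ 2) := by fun_prop
  have hprim : HasDerivAt (fun y => ∫ t in (0 : ℝ)..y, exp (-t ^ 2)) (exp (-x ^ 2)) x :=
    intervalIntegral.integral_hasDerivAt_right integrable_exp_neg_sq.intervalIntegrable
      hcont.stronglyMeasurable.stronglyMeasurableAtFilter hcont.continuousAt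
  rw [funext erfc_eq_sub_intervalIntegral, neg_mul, ← mul_neg]
  exact (hprim.const_sub _).const_mul _

@[fun_prop]
lemma continuous_erfc : Continuous erfc :=
  continuous_iff_continuousAt.2 fun x => (hasDerivAt_erfc x).continuousAt

lemma erfc_zero : erfc 0 = 1 := by
  have h := integral_gaussian_Ioi 1
  simp only [div_one, neg_mul, one_mul] at h
  rw [erfc, h]
  field_simp

lemma erfc_nonneg (x : ℝ) : 0 ≤ erfc x :=
  mul_nonneg (by positivity) (setIntegral_nonneg measurableSet_Ioi fun t _ => (exp_pos _).le)

-- `-t² ≤ x² - 2xt` (i.e. `(t - x)² ≥ 0`) bounds the Gaussian tail by an exponential one.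
lemma integral_Ioi_exp_neg_sq_le {x : ℝ} (hx : 0 < x) :
    ∫ t in Ioi x, exp (-t ^ 2) ≤ exp (-x ^ 2) / (2 * x) := by
  have hneg : -(2 * x) < 0 := by linarith
  calc ∫ t in Ioi x, exp (-t ^ 2)
      ≤ ∫ t in Ioi x, exp (x ^ 2) * exp (-(2 * x) * t) := by
        refine setIntegral_mono_on integrable_exp_neg_sq.integrableOn
          ((integrableOn_exp_mul_Ioi hneg x).const_mul _) measurableSet_Ioi fun t _ => ?_
        rw [← exp_add]
        exact exp_le_exp.2 (by nlinarith [sq_nonneg (x - t)])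
    _ = exp (-x ^ 2) / (2 * x) := by
        rw [integral_const_mul, integral_exp_mul_Ioi hneg, neg_div_neg_eq, mul_div_assoc',
          ← exp_add]
        ring_nf

lemma erfcx_zero : erfcx 0 = 1 := by simp [erfcx, erfc_zero]

lemma erfcx_nonneg (x : ℝ) : 0 ≤ erfcx x := mul_nonneg (exp_pos _).le (erfc_nonneg x)

@[fun_prop]
lemma continuous_erfcx : Continuous erfcx := by unfold erfcx; fun_prop

lemma erfcx_le {x : ℝ} (hx : 0 < x) : erfcx x ≤ 1 / (√π * x) := by
  calc erfcx x ≤ exp (x ^ 2) * (2 / √π * (exp (-x ^ 2) / (2 * x))) :=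
        mul_le_mul_of_nonneg_left (mul_le_mul_of_nonneg_left (integral_Ioi_exp_neg_sq_le hx)
          (by positivity)) (exp_pos _).le
    _ = 1 / (√π * x) := by
        rw [mul_left_comm, mul_div_assoc', ← exp_add, add_neg_cancel, exp_zero]
        field_simp

lemma tendsto_erfcx_atTop : Tendsto erfcx atTop (𝓝 0) := by
  have hbound : Tendsto (fun x : ℝ => 1 / (√π * x)) atTop (𝓝 0) := by
    simpa only [one_div, Function.comp_def, id] using
      tendsto_inv_atTop_zero.comp (tendsto_id.const_mul_atTop (by positivity : 0 < √π))
  exact squeeze_zero' (Eventually.of_forall erfcx_nonneg)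
    ((eventually_gt_atTop 0).mono fun x hx => erfcx_le hx) hbound

lemma hasDerivAt_erfcx (x : ℝ) : HasDerivAt erfcx (2 * x * erfcx x - 2 / √π) x := by
  refine (((hasDerivAt_pow 2 x).exp).mul (hasDerivAt_erfc x)).congr_deriv ?_
  rw [erfcx, exp_neg]
  field_simp
  ring

lemma hasDerivAt_erfcx_mul_sqrt (c : ℝ) {u : ℝ} (hu : 0 < u) :
    HasDerivAt (fun u => erfcx (c * √u)) (c ^ 2 * erfcx (c * √u) - c / (√π * √u)) u := by
  refine ((hasDerivAt_erfcx (c * √u)).comp u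
    ((hasDerivAt_sqrt hu.ne').const_mul c)).congr_deriv ?_
  have : √u ≠ 0 := (sqrt_pos.2 hu).ne'
  field_simp

lemma phi_one (a τ : ℝ) : phi 1 a τ = a / (√π * √τ) - a ^ 2 * erfcx (a * √τ) := by
  rw [phi, mul_one, div_one, div_one, sqrt_mul pi_pos.le]

lemma phi_eq_phi_one {D : ℝ} (hD : 0 ≤ D) (κa τ : ℝ) : phi D κa τ = phi 1 (κa / √D) τ := by
  rw [phi_one, phi, sqrt_mul (mul_nonneg pi_pos.le hD), sqrt_mul pi_pos.le, sqrt_div' _ hD,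
    div_pow, sq_sqrt hD, div_div, div_mul_eq_mul_div, mul_right_comm]
  ring_nf

lemma phi_one_nonneg {a τ : ℝ} (ha : 0 < a) (hτ : 0 < τ) : 0 ≤ phi 1 a τ := by
  have hsτ : 0 < √τ := sqrt_pos.2 hτ
  have h := mul_le_mul_of_nonneg_left (erfcx_le (mul_pos ha hsτ)) (sq_nonneg a)
  rw [phi_one, sub_nonneg]
  calc a ^ 2 * erfcx (a * √τ) ≤ a ^ 2 * (1 / (√π * (a * √τ))) := h
    _ = a / (√π * √τ) := by field_simp

noncomputable def phiLaplacePrimitive (a s u : ℝ) : ℝ :=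
  exp (-s * u) * (a ^ 2 * erfcx (a * √u) - a * √s * erfcx (√s * √u)) / (s - a ^ 2)

lemma hasDerivAt_phiLaplacePrimitive {a s τ : ℝ} (hs : 0 ≤ s) (hne : s ≠ a ^ 2) (hτ : 0 < τ) :
    HasDerivAt (phiLaplacePrimitive a s) (exp (-s * τ) * phi 1 a τ) τ := by
  have hexp : HasDerivAt (fun u => exp (-s * u)) (-s * exp (-s * τ)) τ := by
    simpa [mul_comm] using ((hasDerivAt_id τ).const_mul (-s)).exp
  have h := ((hexp.mul (((hasDerivAt_erfcx_mul_sqrt a hτ).const_mul (a ^ 2)).sub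
    ((hasDerivAt_erfcx_mul_sqrt √s hτ).const_mul (a * √s)))).div_const (s - a ^ 2))
  refine h.congr_deriv ?_
  have hsub : s - a ^ 2 ≠ 0 := sub_ne_zero.2 hne
  have : √τ ≠ 0 := (sqrt_pos.2 hτ).ne'
  rw [phi_one, Pi.sub_apply, sq_sqrt hs]
  field_simp
  ring_nf
  rw [sq_sqrt hs]

lemma continuous_phiLaplacePrimitive (a s : ℝ) : Continuous (phiLaplacePrimitive a s) := by
  unfold phiLaplacePrimitive; fun_prop

lemma phiLaplacePrimitive_zero {a s : ℝ} (ha : 0 < a) (hs : 0 ≤ s) (hne : s ≠ a ^ 2) :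
    phiLaplacePrimitive a s 0 = -(a / (a + √s)) := by
  have hsub : √s - a ≠ 0 := fun h => hne (by rw [← sq_sqrt hs, sub_eq_zero.1 h])
  have hadd : a + √s ≠ 0 := by positivity
  have hfac : s - a ^ 2 = (√s - a) * (a + √s) := by
    linear_combination (sq_sqrt hs).symm
  simp only [phiLaplacePrimitive, mul_zero, exp_zero, sqrt_zero, erfcx_zero, one_mul, mul_one]
  rw [hfac]
  field_simp
  ring

lemma tendsto_phiLaplacePrimitive_atTop {a s : ℝ} (ha : 0 < a) (hs : 0 < s) :
    Tendsto (phiLaplacePrimitive a s) atTop (𝓝 0) := by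
  have hexp : Tendsto (fun u => exp (-s * u)) atTop (𝓝 0) :=
    tendsto_exp_atBot.comp (tendsto_id.const_mul_atTop_of_neg (neg_lt_zero.2 hs))
  have herfcx {c : ℝ} (hc : 0 < c) : Tendsto (fun u => erfcx (c * √u)) atTop (𝓝 0) :=
    tendsto_erfcx_atTop.comp (tendsto_sqrt_atTop.const_mul_atTop hc)
  unfold phiLaplacePrimitive
  simpa using ((hexp.mul (((herfcx ha).const_mul (a ^ 2)).sub
    ((herfcx (sqrt_pos.2 hs)).const_mul (a * √s)))).div_const (s - a ^ 2))

lemma integrableOn_exp_mul_phi_one_of_ne {a s : ℝ} (ha : 0 < a) (hs : 0 < s)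
    (hne : s ≠ a ^ 2) :
    IntegrableOn (fun τ => exp (-s * τ) * phi 1 a τ) (Ioi 0) :=
  integrableOn_Ioi_deriv_of_nonneg (continuous_phiLaplacePrimitive a s).continuousWithinAt
    (fun _ hτ => hasDerivAt_phiLaplacePrimitive hs.le hne hτ)
    (fun _ hτ => mul_nonneg (exp_pos _).le (phi_one_nonneg ha hτ))
    (tendsto_phiLaplacePrimitive_atTop ha hs)

lemma integral_exp_mul_phi_one_of_ne {a s : ℝ} (ha : 0 < a) (hs : 0 < s)
    (hne : s ≠ a ^ 2) :
    ∫ τ in Ioi 0, exp (-s * τ) * phi 1 a τ = a / (a + √s) := by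
  rw [integral_Ioi_of_hasDerivAt_of_nonneg
    (continuous_phiLaplacePrimitive a s).continuousWithinAt
    (fun _ hτ => hasDerivAt_phiLaplacePrimitive hs.le hne hτ)
    (fun _ hτ => mul_nonneg (exp_pos _).le (phi_one_nonneg ha hτ))
    (tendsto_phiLaplacePrimitive_atTop ha hs), phiLaplacePrimitive_zero ha hs.le hne, zero_sub,
    neg_neg]

lemma continuousAt_integral_exp_mul {f : ℝ → ℝ} {s₀ s : ℝ} (hs : s₀ < s)
    (hf : IntegrableOn (fun τ => exp (-s₀ * τ) * f τ) (Ioi 0)) :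
    ContinuousAt (fun s => ∫ τ in Ioi 0, exp (-s * τ) * f τ) s := by
  have hmeas (s' : ℝ) :
      AEStronglyMeasurable (fun τ => exp (-s' * τ) * f τ) (volume.restrict (Ioi 0)) := by
    have hcont : Continuous fun τ => exp ((s₀ - s') * τ) := by fun_prop
    refine (hcont.aestronglyMeasurable.mul hf.aestronglyMeasurable).congr
      (Eventually.of_forall fun τ => ?_)
    change exp ((s₀ - s') * τ) * (exp (-s₀ * τ) * f τ) = exp (-s' * τ) * f τ
    rw [← mul_assoc, ← exp_add]
    ring_nf
  refine continuousAt_of_dominated (Eventually.of_forall hmeas) ?_ hf.norm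
    (Eventually.of_forall fun τ => by fun_prop)
  filter_upwards [eventually_gt_nhds hs] with s' hs'
  filter_upwards [ae_restrict_mem measurableSet_Ioi] with τ (hτ : 0 < τ)
  rw [norm_mul, norm_mul, norm_of_nonneg (exp_pos _).le, norm_of_nonneg (exp_pos _).le]
  gcongr

lemma integral_exp_mul_phi_one {a s : ℝ} (ha : 0 < a) (hs : 0 < s) :
    ∫ τ in Ioi 0, exp (-s * τ) * phi 1 a τ = a / (a + √s) := by
  rcases ne_or_eq s (a ^ 2) with hne | rfl
  · exact integral_exp_mul_phi_one_of_ne ha hs hne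
  -- The primitive degenerates at `s = a²`; both sides are continuous in `s` there.
  have hhalf : a ^ 2 / 2 ≠ a ^ 2 := by linarith
  have hL := continuousAt_integral_exp_mul (half_lt_self hs)
    (integrableOn_exp_mul_phi_one_of_ne ha (half_pos hs) hhalf)
  have hR : ContinuousAt (fun s => a / (a + √s)) (a ^ 2) :=
    continuousAt_const.div (by fun_prop) (by positivity)
  refine ((hL.eventuallyEq_nhds_iff_eventuallyEq_nhdsNE hR).1 ?_).eq_of_nhds
  filter_upwards [self_mem_nhdsWithin, eventually_nhdsWithin_of_eventually_nhds
    (eventually_gt_nhds hs)] with s' hne hs'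
  exact integral_exp_mul_phi_one_of_ne ha hs' hne

/-- the Laplace transform of `φ` is `κ_a / (κ_a + √(Ds))` for every `s > 0`. -/
theorem phi_laplace_transform (D κa : ℝ) (hD : 0 < D) (hκa : 0 < κa) (s : ℝ) (hs : 0 < s) :
    ∫ τ in Set.Ioi (0 : ℝ), Real.exp (-s * τ) * phi D κa τ =
      κa / (κa + Real.sqrt (D * s)) := by
  have hsD : 0 < √D := sqrt_pos.2 hD
  simp_rw [phi_eq_phi_one hD.le]
  rw [integral_exp_mul_phi_one (div_pos hκa hsD) hs, sqrt_mul hD.le]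
  field_simp
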